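/- arXiv:1903.05863 — 4 statements merged into one kernel-verified Lean document; each statement's English description precedes it below -/
import Mathlib

section
/- Let H (a real Hilbert space) be separable with orthonormal basis (e_k)_{k≥1}, let T ≥ 1 be finite, let (Ω, F, P) be a complete probability space, and let 𝔹 = (𝔹_t)_{t∈[0,T]} be an H-valued stochastic process with almost surely continuous sample paths. Let b : [0,T] × H → H be measurable and suppose there exist nonnegative sequences (C_k)_{k≥1} ∈ ℓ¹, (λ_k)_{k≥1} ∈ ℓ², and (L_k)_{k≥1} ∈ ℓ² such that for every k ≥ 1: sup_{t∈[0,T]} sup_{y∈H} |⟨b(t,y), e_k⟩| ≤ C_k λ_k, and |⟨b(t,x) − b(t,y), e_k⟩| ≤ L_k ‖x − y‖ for all t ∈ [0,T] and x, y ∈ H. Then for every initial condition x ∈ H there exists a continuous H-valued process X = (X_t)_{t∈[0,T]}, adapted to the P-augmented filtration generated by 𝔹, such that almost surely X_t = x + ∫_0^t b(s, X_s) ds + 𝔹_t for all t ∈ [0,T]. Moreover the solution is pathwise unique: if X¹ and X² are two such solutions with the same initial condition and the same process 𝔹 on the same probability space, then P( X¹_t = X²_t for all t ∈ [0,T] )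 = 1. -/
open MeasureTheory
open scoped RealInnerProductSpace

lemma aux_norm_le_sqrt_tsum {E : Type*} [NormedAddCommGroup E] [InnerProductSpace ℝ E]
    (e : HilbertBasis ℕ ℝ E) (v : E) (a : ℕ → ℝ)
    (hsum : Summable fun k => (a k) ^ 2) (hle : ∀ k, |⟪v, e k⟫| ≤ a k) :
    ‖v‖ ≤ Real.sqrt (∑' k, (a k) ^ 2) := by
  have heq : ∀ k, ⟪v, e k⟫ * ⟪e k, v⟫ = ⟪v, e k⟫ ^ 2 := fun k => by
    rw [real_inner_comm (e k) v, sq]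
  have hs : Summable fun k => ⟪v, e k⟫ ^ 2 := by
    simpa only [heq] using e.summable_inner_mul_inner v v
  have h2 : ‖v‖ ^ 2 = ∑' k, ⟪v, e k⟫ ^ 2 := by
    rw [← real_inner_self_eq_norm_sq, ← e.tsum_inner_mul_inner v v]
    exact tsum_congr heq
  have h3 : ∑' k, ⟪v, e k⟫ ^ 2 ≤ ∑' k, (a k) ^ 2 := by
    refine Summable.tsum_le_tsum (fun k => ?_) hs hsum
    calc ⟪v, e k⟫ ^ 2 = |⟪v, e k⟫| ^ 2 := (sq_abs _).symm
      _ ≤ (a k) ^ 2 := pow_le_pow_left₀ (abs_nonneg _) (hle k) 2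
  calc ‖v‖ = Real.sqrt (‖v‖ ^ 2) := (Real.sqrt_sq (norm_nonneg v)).symm
    _ ≤ Real.sqrt (∑' k, (a k) ^ 2) := Real.sqrt_le_sqrt (h2 ▸ h3)

lemma aux_picard_decay {T Kp A : ℝ} (hKp : 0 < Kp) (hA : 0 ≤ A)
    (g : ℕ → ℝ → ℝ)
    (hg0 : ∀ t ∈ Set.Icc (0:ℝ) T, g 0 t ≤ A)
    (hint : ∀ n, IntegrableOn (g n) (Set.Ioc 0 T))
    (hrec : ∀ n, ∀ t ∈ Set.Icc (0:ℝ) T, g (n+1) t ≤ Kp * ∫ s in Set.Ioc (0:ℝ) t, g n s) :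
    ∀ n, ∀ t ∈ Set.Icc (0:ℝ) T, g n t ≤ A * (1/2) ^ n * Real.exp (2 * Kp * t) := by
  intro n
  induction n with
  | zero =>
    intro t ht
    have h1 : (1:ℝ) ≤ Real.exp (2 * Kp * t) :=
      Real.one_le_exp (by nlinarith [ht.1])
    calc g 0 t ≤ A := hg0 t ht
      _ = A * (1/2)^0 * 1 := by ring
      _ ≤ A * (1/2)^0 * Real.exp (2 * Kp * t) := by
          apply mul_le_mul_of_nonneg_left h1 (by norm_num [hA])
  | succ n ih =>
    intro t ht
    have hKp2 : (2 * Kp) ≠ 0 := by positivity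
    have hexp : (∫ s in Set.Ioc (0:ℝ) t, Real.exp (2 * Kp * s))
        = (2 * Kp)⁻¹ * (Real.exp (2 * Kp * t) - 1) := by
      rw [← intervalIntegral.integral_of_le ht.1]
      rw [intervalIntegral.integral_comp_mul_left Real.exp hKp2]
      simp [integral_exp, Real.exp_zero, smul_eq_mul]
    have hcontexp : Continuous fun s : ℝ => A * (1/2)^n * Real.exp (2 * Kp * s) := by
      fun_prop
    have hmono : (∫ s in Set.Ioc (0:ℝ) t, g n s)
        ≤ ∫ s in Set.Ioc (0:ℝ) t, A * (1/2)^n * Real.exp (2 * Kp * s) := by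
      refine setIntegral_mono_on ?_ ?_ measurableSet_Ioc ?_
      · exact (hint n).mono_set (Set.Ioc_subset_Ioc_right ht.2)
      · exact hcontexp.integrableOn_Ioc
      · intro s hs
        exact ih s ⟨le_of_lt hs.1, hs.2.trans ht.2⟩
    have hexp0 : (0:ℝ) ≤ Real.exp (2 * Kp * t) - 1 := by
      have : (1:ℝ) ≤ Real.exp (2 * Kp * t) := Real.one_le_exp (by nlinarith [ht.1])
      linarith
    calc g (n+1) t ≤ Kp * ∫ s in Set.Ioc (0:ℝ) t, g n s := hrec n t ht
      _ ≤ Kp * ∫ s in Set.Ioc (0:ℝ) t, A * (1/2)^n * Real.exp (2 * Kp * s) :=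
          mul_le_mul_of_nonneg_left hmono hKp.le
      _ = Kp * (A * (1/2)^n * ((2*Kp)⁻¹ * (Real.exp (2*Kp*t) - 1))) := by
          rw [MeasureTheory.integral_const_mul, hexp]
      _ = A * (1/2)^(n+1) * (Real.exp (2*Kp*t) - 1) := by
          field_simp
          ring
      _ ≤ A * (1/2)^(n+1) * Real.exp (2*Kp*t) := by
          apply mul_le_mul_of_nonneg_left (by linarith) (by positivity)

lemma aux_measurable_of_eq_off_null {Ω β : Type*} {m0 : MeasurableSpace Ω} [MeasurableSpace β]
    (P : Measure Ω) {m : MeasurableSpace Ω}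
    (hgen : MeasurableSpace.generateFrom {A : Set Ω | ∃ N, MeasurableSet[m0] N ∧ P N = 0 ∧ A ⊆ N} ≤ m)
    {f g : Ω → β} (hf : Measurable[m] f)
    {Nb : Set Ω} (hNb : MeasurableSet[m0] Nb) (hNnull : P Nb = 0)
    (hfg : ∀ ω ∉ Nb, f ω = g ω) : Measurable[m] g := by
  intro B hB
  have hN : MeasurableSet[m] Nb :=
    hgen _ (MeasurableSpace.measurableSet_generateFrom ⟨Nb, hNb, hNnull, subset_rfl⟩)
  have hsub : MeasurableSet[m] (g ⁻¹' B ∩ Nb) :=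
    hgen _ (MeasurableSpace.measurableSet_generateFrom ⟨Nb, hNb, hNnull, Set.inter_subset_right⟩)
  have hdecomp : g ⁻¹' B = (f ⁻¹' B ∩ Nbᶜ) ∪ (g ⁻¹' B ∩ Nb) := by
    ext ω
    by_cases hω : ω ∈ Nb
    · simp [hω]
    · simp [hω, Set.mem_preimage, hfg ω hω]
  rw [hdecomp]
  exact ((hf hB).inter hN.compl).union hsub

lemma aux_meas_param_integral {Ω : Type*} [MeasurableSpace Ω] {F : Type*} [NormedAddCommGroup F]
    [NormedSpace ℝ F] [MeasurableSpace F] [BorelSpace F] [SecondCountableTopology F]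
    (u : ℝ → Ω → F) (hucont : ∀ ω, Continuous fun r => u r ω)
    (hum : ∀ r, Measurable (u r))
    (φ : ℝ → F → F) (hφ : Measurable fun p : ℝ × F => φ p.1 p.2)
    (s : Set ℝ) :
    Measurable fun ω => ∫ r in s, φ r (u r ω) := by
  have h1 : StronglyMeasurable (Function.uncurry u) :=
    stronglyMeasurable_uncurry_of_continuous_of_stronglyMeasurable hucont
      (fun r => (hum r).stronglyMeasurable)
  have h2 : StronglyMeasurable (Function.uncurry (fun r ω => φ r (u r ω))) := by
    have hm : Measurable (Function.uncurry (fun r ω => φ r (u r ω))) := by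
      have : (Function.uncurry (fun r ω => φ r (u r ω)))
          = (fun p : ℝ × F => φ p.1 p.2) ∘ (fun p : ℝ × Ω => (p.1, Function.uncurry u p)) := rfl
      rw [this]
      exact hφ.comp (measurable_fst.prodMk h1.measurable)
    exact hm.stronglyMeasurable
  exact (h2.integral_prod_left (μ := volume.restrict s)).measurable

/-- Existence of an adapted solution (w.r.t. the `P`-augmented filtration
generated by the driving noise `𝔹`) of the SDE `X_t = x + ∫_0^t b(s, X_s) ds + 𝔹_t` on the
separable Hilbert space `E`, under the coordinatewise boundedness and Lipschitz conditions of
the paper, together with pathwise uniqueness. -/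
theorem restoration_wellposedness_strong_existence_pathwise_uniqueness
    {E : Type*} [NormedAddCommGroup E] [InnerProductSpace ℝ E] [CompleteSpace E]
    [MeasurableSpace E] [BorelSpace E] [SecondCountableTopology E]
    (e : HilbertBasis ℕ ℝ E)
    (T : ℝ) (hT : 1 ≤ T)
    {Ω : Type*} [MeasurableSpace Ω] (P : Measure Ω) [IsProbabilityMeasure P]
    (hPcomplete : P.IsComplete)
    (𝔹 : ℝ → Ω → E)
    (h𝔹meas : ∀ t, Measurable (𝔹 t))
    (h𝔹cont : ∀ᵐ ω ∂P, ContinuousOn (fun t => 𝔹 t ω) (Set.Icc 0 T))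
    (b : ℝ → E → E)
    (hbmeas : Measurable (fun p : ℝ × E => b p.1 p.2))
    (C lam L : ℕ → ℝ)
    (hCpos : ∀ k, 0 ≤ C k) (hlampos : ∀ k, 0 ≤ lam k) (hLpos : ∀ k, 0 ≤ L k)
    (hCl1 : Summable C)
    (hlaml2 : Summable (fun k => (lam k) ^ 2))
    (hLl2 : Summable (fun k => (L k) ^ 2))
    (hbound : ∀ k, ∀ t ∈ Set.Icc (0 : ℝ) T, ∀ y : E, |⟪b t y, e k⟫| ≤ C k * lam k)
    (hlip : ∀ k, ∀ t ∈ Set.Icc (0 : ℝ) T, ∀ x y : E,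
      |⟪b t x - b t y, e k⟫| ≤ L k * ‖x - y‖)
    (x : E) :
    (∃ X : ℝ → Ω → E,
      -- adaptedness to the P-augmented filtration generated by 𝔹
      (∀ t ∈ Set.Icc (0 : ℝ) T,
        @Measurable Ω E
          ((⨆ s ∈ Set.Icc (0 : ℝ) t, MeasurableSpace.comap (𝔹 s) inferInstance) ⊔
            MeasurableSpace.generateFrom {A : Set Ω | ∃ N, MeasurableSet N ∧ P N = 0 ∧ A ⊆ N})
          _ (X t)) ∧
      -- almost surely continuous sample paths
      (∀ᵐ ω ∂P, ContinuousOn (fun t => X t ω) (Set.Icc 0 T)) ∧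
      -- the integral equation holds almost surely, for all t ∈ [0,T]
      (∀ᵐ ω ∂P, ∀ t ∈ Set.Icc (0 : ℝ) T,
        X t ω = x + (∫ s in Set.Ioc (0 : ℝ) t, b s (X s ω)) + 𝔹 t ω)) ∧
    -- pathwise uniqueness
    (∀ X₁ X₂ : ℝ → Ω → E,
      (∀ᵐ ω ∂P, ContinuousOn (fun t => X₁ t ω) (Set.Icc 0 T)) →
      (∀ᵐ ω ∂P, ∀ t ∈ Set.Icc (0 : ℝ) T,
        X₁ t ω = x + (∫ s in Set.Ioc (0 : ℝ) t, b s (X₁ s ω)) + 𝔹 t ω) →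
      (∀ᵐ ω ∂P, ContinuousOn (fun t => X₂ t ω) (Set.Icc 0 T)) →
      (∀ᵐ ω ∂P, ∀ t ∈ Set.Icc (0 : ℝ) T,
        X₂ t ω = x + (∫ s in Set.Ioc (0 : ℝ) t, b s (X₂ s ω)) + 𝔹 t ω) →
      ∀ᵐ ω ∂P, ∀ t ∈ Set.Icc (0 : ℝ) T, X₁ t ω = X₂ t ω) := by
  classical
  set NullC : Set (Set Ω) := {A : Set Ω | ∃ N, MeasurableSet N ∧ P N = 0 ∧ A ⊆ N} with hNullC
  have hT0 : (0:ℝ) ≤ T := zero_le_one.trans hT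
  -- global bound and Lipschitz constants
  have hc : ∀ k, C k ≤ ∑' j, C j := fun k => Summable.le_tsum hCl1 k fun j _ => hCpos j
  have hCLsum : Summable fun k => (C k * lam k) ^ 2 := by
    refine Summable.of_nonneg_of_le (fun k => sq_nonneg _) (fun k => ?_)
      (hlaml2.mul_left ((∑' j, C j) ^ 2))
    calc (C k * lam k) ^ 2 = C k ^ 2 * lam k ^ 2 := by ring
      _ ≤ (∑' j, C j) ^ 2 * lam k ^ 2 :=
        mul_le_mul_of_nonneg_right (pow_le_pow_left₀ (hCpos k) (hc k) 2) (sq_nonneg _)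
  set Mr := Real.sqrt (∑' k, (C k * lam k) ^ 2) with hMrdef
  have hMrnn : 0 ≤ Mr := Real.sqrt_nonneg _
  have hbM : ∀ t ∈ Set.Icc (0:ℝ) T, ∀ y : E, ‖b t y‖ ≤ Mr := fun t ht y =>
    aux_norm_le_sqrt_tsum e _ _ hCLsum (fun k => hbound k t ht y)
  set K0 := Real.sqrt (∑' k, (L k) ^ 2) with hK0def
  set Kp := max K0 1 with hKpdef
  have hKppos : (0:ℝ) < Kp := lt_of_lt_of_le one_pos (le_max_right _ _)
  have hbK : ∀ t ∈ Set.Icc (0:ℝ) T, ∀ x₁ x₂ : E, ‖b t x₁ - b t x₂‖ ≤ Kp * ‖x₁ - x₂‖ := by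
    intro t ht x₁ x₂
    have hsum2 : Summable fun k => (L k * ‖x₁ - x₂‖) ^ 2 := by
      simpa [mul_pow] using hLl2.mul_right (‖x₁ - x₂‖ ^ 2)
    calc ‖b t x₁ - b t x₂‖ ≤ Real.sqrt (∑' k, (L k * ‖x₁ - x₂‖) ^ 2) :=
        aux_norm_le_sqrt_tsum e _ _ hsum2 (fun k => hlip k t ht x₁ x₂)
      _ = Real.sqrt ((∑' k, (L k) ^ 2) * ‖x₁ - x₂‖ ^ 2) := by
          rw [show (fun k => (L k * ‖x₁ - x₂‖) ^ 2) = fun k => (L k) ^ 2 * ‖x₁ - x₂‖ ^ 2 from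
            funext fun k => by ring, tsum_mul_right]
      _ = K0 * ‖x₁ - x₂‖ := by
          rw [Real.sqrt_mul (tsum_nonneg fun k => sq_nonneg _), Real.sqrt_sq (norm_nonneg _)]
      _ ≤ Kp * ‖x₁ - x₂‖ := mul_le_mul_of_nonneg_right (le_max_left _ _) (norm_nonneg _)
  -- null set off which 𝔹 has continuous paths
  obtain ⟨N0, hN0sub, hN0meas, hN0null⟩ :
      ∃ N0, {ω | ¬ ContinuousOn (fun t => 𝔹 t ω) (Set.Icc 0 T)} ⊆ N0 ∧
        MeasurableSet N0 ∧ P N0 = 0 :=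
    exists_measurable_superset_of_null (ae_iff.mp h𝔹cont)
  have hcontS : ∀ ω ∉ N0, ContinuousOn (fun t => 𝔹 t ω) (Set.Icc 0 T) := by
    intro ω hω
    by_contra hc
    exact hω (hN0sub hc)
  -- clamped, surely-continuous modification of the noise
  set clamp : ℝ → ℝ := fun s => min (max s 0) T with hclampdef
  have hclampmem : ∀ s, clamp s ∈ Set.Icc (0:ℝ) T :=
    fun s => ⟨le_min (le_max_right _ _) hT0, min_le_right _ _⟩
  have hclampeq : ∀ s ∈ Set.Icc (0:ℝ) T, clamp s = s := by
    intro s hs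
    rw [hclampdef]
    simp only [max_eq_left hs.1, min_eq_left hs.2]
  have hclampcont : Continuous clamp := (continuous_id.max continuous_const).min continuous_const
  set Bn : ℝ → Ω → E := fun s ω => if ω ∈ N0 then 0 else 𝔹 (clamp s) ω with hBndef
  have hBncont : ∀ ω, Continuous fun s => Bn s ω := by
    intro ω
    by_cases hω : ω ∈ N0
    · simp only [hBndef, if_pos hω]
      exact continuous_const
    · simp only [hBndef, if_neg hω]
      exact (hcontS ω hω).comp_continuous hclampcont hclampmem
  have hBnB : ∀ ω ∉ N0, ∀ s ∈ Set.Icc (0:ℝ) T, Bn s ω = 𝔹 s ω := by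
    intro ω hω s hs
    simp only [hBndef, if_neg hω, hclampeq s hs]
  -- truncated drift
  set b' : ℝ → E → E := fun s y => if s ∈ Set.Ioc (0:ℝ) T then b s y else 0 with hb'def
  have hb'unc : Measurable fun p : ℝ × E => b' p.1 p.2 := by
    simp only [hb'def]
    exact Measurable.ite (measurable_fst measurableSet_Ioc) hbmeas measurable_const
  have hb'zero : ∀ s ∉ Set.Ioc (0:ℝ) T, ∀ y : E, b' s y = 0 := by
    intro s hs y; simp only [hb'def, if_neg hs]
  have hb'bound : ∀ (s : ℝ) (y : E), ‖b' s y‖ ≤ Mr := by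
    intro s y
    by_cases hs : s ∈ Set.Ioc (0:ℝ) T
    · simp only [hb'def, if_pos hs]
      exact hbM s ⟨hs.1.le, hs.2⟩ y
    · simp only [hb'def, if_neg hs, norm_zero]
      exact hMrnn
  have hb'lip : ∀ (s : ℝ) (y₁ y₂ : E), ‖b' s y₁ - b' s y₂‖ ≤ Kp * ‖y₁ - y₂‖ := by
    intro s y₁ y₂
    by_cases hs : s ∈ Set.Ioc (0:ℝ) T
    · simp only [hb'def, if_pos hs]
      exact hbK s ⟨hs.1.le, hs.2⟩ y₁ y₂
    · simp only [hb'def, if_neg hs, sub_zero, norm_zero]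
      positivity
  -- integrability of truncated-drift compositions
  have hIntb' : ∀ f : ℝ → E, Measurable f → Integrable (fun s => b' s (f s)) := by
    intro f hf
    have hm : Measurable fun s => b' s (f s) := hb'unc.comp (measurable_id.prodMk hf)
    refine Integrable.mono' (g := fun s => Set.indicator (Set.Ioc (0:ℝ) T) (fun _ => Mr) s) ?_
      hm.aestronglyMeasurable (Filter.Eventually.of_forall fun s => ?_)
    · rw [integrable_indicator_iff measurableSet_Ioc]
      exact integrableOn_const measure_Ioc_lt_top.ne
    · by_cases hs : s ∈ Set.Ioc (0:ℝ) T
      · simp only [Set.indicator_of_mem hs]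
        exact hb'bound s (f s)
      · simp only [Set.indicator_of_notMem hs]
        simp [hb'zero s hs]
  -- Ioc set integrals agree with interval integrals (for the truncated drift)
  have hIoc_eq : ∀ (f : ℝ → E), (∀ s ∉ Set.Ioc (0:ℝ) T, f s = 0) →
      ∀ t : ℝ, (∫ s in Set.Ioc (0:ℝ) t, f s) = ∫ s in (0:ℝ)..t, f s := by
    intro f hf t
    rcases le_or_gt 0 t with h | h
    · rw [intervalIntegral.integral_of_le h]
    · rw [intervalIntegral.integral_of_ge h.le]
      have h1 : (∫ s in Set.Ioc t 0, f s) = 0 := by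
        rw [setIntegral_congr_fun (g := fun _ => (0:E)) measurableSet_Ioc ?_, integral_zero]
        intro s hs
        refine hf s (fun hs' => ?_)
        exact absurd (hs'.1.trans_le hs.2) (lt_irrefl 0)
      have h2 : Set.Ioc (0:ℝ) t = ∅ := Set.Ioc_eq_empty (not_lt.mpr h.le)
      rw [h1, h2]
      simp
  -- Picard iterates
  obtain ⟨Xi, hXi0, hXiS⟩ :
      ∃ Xi : ℕ → ℝ → Ω → E, (∀ t ω, Xi 0 t ω = x + Bn t ω) ∧
        ∀ n t ω, Xi (n+1) t ω =
          x + (∫ s in Set.Ioc (0:ℝ) t, b' s (Xi n s ω)) + Bn t ω :=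
    ⟨fun n => Nat.rec (motive := fun _ => ℝ → Ω → E) (fun t ω => x + Bn t ω)
      (fun _ Xp t ω => x + (∫ s in Set.Ioc (0:ℝ) t, b' s (Xp s ω)) + Bn t ω) n,
      fun _ _ => rfl, fun _ _ _ => rfl⟩
  have hXicont : ∀ n ω, Continuous fun s => Xi n s ω := by
    intro n
    induction n with
    | zero =>
      intro ω
      have h : (fun s => Xi 0 s ω) = fun s => x + Bn s ω := funext fun s => hXi0 s ω
      rw [h]
      exact continuous_const.add (hBncont ω)
    | succ n ih =>
      intro ω
      have hint := hIntb' _ (ih ω).measurable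
      have hprim : Continuous fun t => ∫ s in (0:ℝ)..t, b' s (Xi n s ω) :=
        hint.continuous_primitive 0
      have h : (fun s => Xi (n+1) s ω)
          = fun t => x + (∫ s in (0:ℝ)..t, b' s (Xi n s ω)) + Bn t ω := by
        funext t
        rw [hXiS, hIoc_eq _ (fun s hs => hb'zero s hs _) t]
      rw [h]
      exact (continuous_const.add hprim).add (hBncont ω)
  -- geometric decay of successive differences
  set D : ℝ := (Mr * T) * Real.exp (2 * Kp * T) with hDdef
  have hMrT : (0:ℝ) ≤ Mr * T := by positivity
  have hDnn : 0 ≤ D := by positivity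
  have hvolIoc : ∀ t ∈ Set.Icc (0:ℝ) T, (volume (Set.Ioc (0:ℝ) t)).toReal ≤ T := by
    intro t ht
    rw [Real.volume_Ioc, ENNReal.toReal_ofReal (by linarith [ht.1])]
    linarith [ht.2]
  have hdiff : ∀ ω n t, Xi (n+1+1) t ω - Xi (n+1) t ω
      = ∫ s in Set.Ioc (0:ℝ) t, (b' s (Xi (n+1) s ω) - b' s (Xi n s ω)) := by
    intro ω n t
    rw [hXiS (n+1), hXiS n,
      integral_sub ((hIntb' _ (hXicont (n+1) ω).measurable).integrableOn)
        ((hIntb' _ (hXicont n ω).measurable).integrableOn)]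
    abel
  have hgD : ∀ ω n, ∀ t ∈ Set.Icc (0:ℝ) T, ‖Xi (n+1) t ω - Xi n t ω‖ ≤ D * (1/2)^n := by
    intro ω
    have hkey := aux_picard_decay (T := T) hKppos hMrT
      (fun n t => ‖Xi (n+1) t ω - Xi n t ω‖) ?_ ?_ ?_
    · intro n t ht
      calc ‖Xi (n+1) t ω - Xi n t ω‖ ≤ (Mr*T) * (1/2)^n * Real.exp (2*Kp*t) := hkey n t ht
        _ ≤ (Mr*T) * (1/2)^n * Real.exp (2*Kp*T) := by
            apply mul_le_mul_of_nonneg_left (Real.exp_le_exp.mpr (by nlinarith [ht.2])) (by positivity)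
        _ = D * (1/2)^n := by rw [hDdef]; ring
    · -- initial bound
      intro t ht
      show ‖Xi 1 t ω - Xi 0 t ω‖ ≤ Mr * T
      have heq : Xi 1 t ω - Xi 0 t ω = ∫ s in Set.Ioc (0:ℝ) t, b' s (Xi 0 s ω) := by
        rw [hXiS 0 t ω, hXi0 t ω]
        abel
      rw [heq]
      calc ‖∫ s in Set.Ioc (0:ℝ) t, b' s (Xi 0 s ω)‖
          ≤ Mr * (volume (Set.Ioc (0:ℝ) t)).toReal :=
            norm_setIntegral_le_of_norm_le_const measure_Ioc_lt_top
              (fun s _ => hb'bound s _)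
        _ ≤ Mr * T := mul_le_mul_of_nonneg_left (hvolIoc t ht) hMrnn
    · -- integrability
      intro n
      exact (((hXicont (n+1) ω).sub (hXicont n ω)).norm).integrableOn_Ioc
    · -- recursion
      intro n t ht
      show ‖Xi (n+1+1) t ω - Xi (n+1) t ω‖
        ≤ Kp * ∫ s in Set.Ioc (0:ℝ) t, ‖Xi (n+1) s ω - Xi n s ω‖
      rw [hdiff ω n t]
      calc ‖∫ s in Set.Ioc (0:ℝ) t, (b' s (Xi (n+1) s ω) - b' s (Xi n s ω))‖
          ≤ ∫ s in Set.Ioc (0:ℝ) t, ‖b' s (Xi (n+1) s ω) - b' s (Xi n s ω)‖ :=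
            norm_integral_le_integral_norm _
        _ ≤ ∫ s in Set.Ioc (0:ℝ) t, Kp * ‖Xi (n+1) s ω - Xi n s ω‖ := by
            refine setIntegral_mono_on ?_ ?_ measurableSet_Ioc (fun s _ => hb'lip s _ _)
            · exact (((hIntb' _ (hXicont (n+1) ω).measurable).integrableOn.sub
                ((hIntb' _ (hXicont n ω).measurable).integrableOn)).norm)
            · exact (continuous_const.mul (((hXicont (n+1) ω).sub (hXicont n ω)).norm)).integrableOn_Ioc
        _ = Kp * ∫ s in Set.Ioc (0:ℝ) t, ‖Xi (n+1) s ω - Xi n s ω‖ :=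
            MeasureTheory.integral_const_mul Kp _
  -- the limit process
  haveI : Nonempty E := ⟨0⟩
  have hCauchy : ∀ t ∈ Set.Icc (0:ℝ) T, ∀ ω, CauchySeq fun n => Xi n t ω := by
    intro t ht ω
    refine cauchySeq_of_le_geometric (1/2) D (by norm_num) (fun n => ?_)
    rw [dist_eq_norm']
    exact hgD ω n t ht
  set X : ℝ → Ω → E := fun t ω => Filter.limUnder Filter.atTop fun n => Xi n t ω with hXdef
  have hXlim : ∀ t ∈ Set.Icc (0:ℝ) T, ∀ ω,
      Filter.Tendsto (fun n => Xi n t ω) Filter.atTop (nhds (X t ω)) :=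
    fun t ht ω => (hCauchy t ht ω).tendsto_limUnder
  have hXd2 : ∀ t ∈ Set.Icc (0:ℝ) T, ∀ ω n, ‖X t ω - Xi n t ω‖ ≤ (2*D) * (1/2)^n := by
    intro t ht ω n
    have h := dist_le_of_le_geometric_of_tendsto (1/2) D (by norm_num : (1/2:ℝ) < 1)
      (fun m => by rw [dist_eq_norm']; exact hgD ω m t ht) (hXlim t ht ω) n
    rw [dist_eq_norm'] at h
    calc ‖X t ω - Xi n t ω‖ ≤ D * (1/2)^n / (1 - 1/2) := h
      _ = (2*D) * (1/2)^n := by ring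
  have htendgeo : ∀ c : ℝ, Filter.Tendsto (fun n : ℕ => c * (1/2:ℝ)^n) Filter.atTop (nhds 0) := by
    intro c
    have := (tendsto_pow_atTop_nhds_zero_of_lt_one (by norm_num : (0:ℝ) ≤ 1/2)
      (by norm_num : (1/2:ℝ) < 1)).const_mul c
    simpa using this
  have hXcont : ∀ ω, ContinuousOn (fun t => X t ω) (Set.Icc 0 T) := by
    intro ω
    have hunif : TendstoUniformlyOn (fun n t => Xi n t ω) (fun t => X t ω)
        Filter.atTop (Set.Icc 0 T) := by
      rw [Metric.tendstoUniformlyOn_iff]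
      intro ε hε
      filter_upwards [(htendgeo (2*D)).eventually_lt_const hε] with n hn t ht
      calc dist (X t ω) (Xi n t ω) = ‖X t ω - Xi n t ω‖ := dist_eq_norm _ _
        _ ≤ (2*D) * (1/2)^n := hXd2 t ht ω n
        _ < ε := hn
    exact hunif.continuousOn
      (Filter.Eventually.of_forall fun n => (hXicont n ω).continuousOn).frequently
  -- the fixed point equation in terms of the truncated drift and modified noise
  have hXIntOn : ∀ ω, ∀ t ∈ Set.Icc (0:ℝ) T,
      IntegrableOn (fun s => b' s (X s ω)) (Set.Ioc (0:ℝ) t) := by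
    intro ω t ht
    have hXae : AEMeasurable (fun s => X s ω) (volume.restrict (Set.Ioc (0:ℝ) t)) := by
      have h1 := (hXcont ω).aemeasurable (μ := volume) measurableSet_Icc
      exact h1.mono_measure (Measure.restrict_mono
        (Set.Ioc_subset_Icc_self.trans (Set.Icc_subset_Icc_right ht.2)) le_rfl)
    have hbXae : AEStronglyMeasurable (fun s => b' s (X s ω))
        (volume.restrict (Set.Ioc (0:ℝ) t)) :=
      (hb'unc.comp_aemeasurable (aemeasurable_id.prodMk hXae)).aestronglyMeasurable
    refine Integrable.mono' (g := fun _ => Mr) ?_ hbXae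
      (Filter.Eventually.of_forall fun s => hb'bound s _)
    exact integrableOn_const measure_Ioc_lt_top.ne
  have hXeqn : ∀ ω, ∀ t ∈ Set.Icc (0:ℝ) T,
      X t ω = x + (∫ s in Set.Ioc (0:ℝ) t, b' s (X s ω)) + Bn t ω := by
    intro ω t ht
    have hIter : ∀ n, ‖(∫ s in Set.Ioc (0:ℝ) t, b' s (Xi n s ω))
        - ∫ s in Set.Ioc (0:ℝ) t, b' s (X s ω)‖ ≤ (Kp * ((2*D) * (1/2)^n) * T) := by
      intro n
      rw [← integral_sub ((hIntb' _ (hXicont n ω).measurable).integrableOn) (hXIntOn ω t ht)]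
      have hb : ∀ s ∈ Set.Ioc (0:ℝ) t, ‖b' s (Xi n s ω) - b' s (X s ω)‖
          ≤ Kp * ((2*D) * (1/2)^n) := by
        intro s hs
        have hsIcc : s ∈ Set.Icc (0:ℝ) T := ⟨hs.1.le, hs.2.trans ht.2⟩
        calc ‖b' s (Xi n s ω) - b' s (X s ω)‖ ≤ Kp * ‖Xi n s ω - X s ω‖ := hb'lip s _ _
          _ ≤ Kp * ((2*D) * (1/2)^n) := by
              refine mul_le_mul_of_nonneg_left ?_ hKppos.le
              rw [norm_sub_rev]
              exact hXd2 s hsIcc ω n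
      calc ‖∫ s in Set.Ioc (0:ℝ) t, (b' s (Xi n s ω) - b' s (X s ω))‖
          ≤ (Kp * ((2*D) * (1/2)^n)) * (volume (Set.Ioc (0:ℝ) t)).toReal :=
            norm_setIntegral_le_of_norm_le_const measure_Ioc_lt_top hb
        _ ≤ Kp * ((2*D) * (1/2)^n) * T :=
            mul_le_mul_of_nonneg_left (hvolIoc t ht) (by positivity)
    have htendI : Filter.Tendsto (fun n => ∫ s in Set.Ioc (0:ℝ) t, b' s (Xi n s ω))
        Filter.atTop (nhds (∫ s in Set.Ioc (0:ℝ) t, b' s (X s ω))) := by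
      have h0 : Filter.Tendsto (fun n : ℕ => Kp * ((2*D) * (1/2:ℝ)^n) * T)
          Filter.atTop (nhds 0) := by
        have := ((htendgeo (2*D)).const_mul Kp).mul_const T
        simpa [mul_assoc] using this
      have hz := squeeze_zero_norm hIter h0
      have := hz.add_const (∫ s in Set.Ioc (0:ℝ) t, b' s (X s ω))
      simpa using this
    have h1 : Filter.Tendsto (fun n => Xi (n+1) t ω) Filter.atTop (nhds (X t ω)) :=
      (hXlim t ht ω).comp (Filter.tendsto_add_atTop_nat 1)
    have h2 : Filter.Tendsto (fun n => Xi (n+1) t ω) Filter.atTop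
        (nhds (x + (∫ s in Set.Ioc (0:ℝ) t, b' s (X s ω)) + Bn t ω)) := by
      have hfe : (fun n => Xi (n+1) t ω)
          = fun n => x + (∫ s in Set.Ioc (0:ℝ) t, b' s (Xi n s ω)) + Bn t ω :=
        funext fun n => hXiS n t ω
      rw [hfe]
      exact (tendsto_const_nhds.add htendI).add tendsto_const_nhds
    exact tendsto_nhds_unique h1 h2
  have hN0ae : ∀ᵐ ω ∂P, ω ∉ N0 := by
    rw [MeasureTheory.ae_iff]
    simpa [not_not] using hN0null
  constructor
  · -- existence
    refine ⟨X, ?_, Filter.Eventually.of_forall hXcont, ?_⟩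
    · -- adaptedness
      intro t ht
      set m : MeasurableSpace Ω :=
        (⨆ s ∈ Set.Icc (0:ℝ) t, MeasurableSpace.comap (𝔹 s) inferInstance) ⊔
          MeasurableSpace.generateFrom NullC
        with hmdef
      have hgen_le : MeasurableSpace.generateFrom NullC ≤ m := by
        rw [hmdef]
        exact @le_sup_right (MeasurableSpace Ω) _ _ _
      have h𝔹m : ∀ s ∈ Set.Icc (0:ℝ) t, Measurable[m] (𝔹 s) := by
        intro s hs
        have h1 : MeasurableSpace.comap (𝔹 s) inferInstance ≤ m :=
          le_trans (le_biSup (fun s => MeasurableSpace.comap (𝔹 s) inferInstance) hs) le_sup_left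
        exact fun B hB => h1 _ ⟨B, hB, rfl⟩
      have hBnm : ∀ s ∈ Set.Icc (0:ℝ) t, Measurable[m] (Bn s) := by
        intro s hs
        refine aux_measurable_of_eq_off_null P hgen_le (h𝔹m s hs) hN0meas hN0null
          (fun ω hω => ?_)
        have hsT : s ∈ Set.Icc (0:ℝ) T := ⟨hs.1, hs.2.trans ht.2⟩
        simp only [hBndef, if_neg hω, hclampeq s hsT]
      have hXim : ∀ n, ∀ s ∈ Set.Icc (0:ℝ) t, Measurable[m] (Xi n s) := by
        intro n
        induction n with
        | zero =>
          intro s hs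
          have h : Xi 0 s = fun ω => x + Bn s ω := funext fun ω => hXi0 s ω
          rw [h]
          exact (hBnm s hs).const_add x
        | succ n ih =>
          intro s hs
          set ct : ℝ → ℝ := fun r => min (max r 0) t with hctdef
          have hctmem : ∀ r, ct r ∈ Set.Icc (0:ℝ) t :=
            fun r => ⟨le_min (le_max_right _ _) ht.1, min_le_right _ _⟩
          have hctcont : Continuous ct :=
            (continuous_id.max continuous_const).min continuous_const
          have hcteq : ∀ r ∈ Set.Icc (0:ℝ) t, ct r = r := by
            intro r hr
            rw [hctdef]
            simp only [max_eq_left hr.1, min_eq_left hr.2]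
          have hu : Measurable[m] fun ω => ∫ r in Set.Ioc (0:ℝ) s, b' r (Xi n (ct r) ω) :=
            @aux_meas_param_integral Ω m E _ _ _ _ _ (fun r ω => Xi n (ct r) ω)
              (fun ω => (hXicont n ω).comp hctcont) (fun r => ih (ct r) (hctmem r)) b' hb'unc _
          have h : Xi (n+1) s
              = fun ω => x + (∫ r in Set.Ioc (0:ℝ) s, b' r (Xi n (ct r) ω)) + Bn s ω := by
            funext ω
            rw [hXiS]
            have hI : (∫ r in Set.Ioc (0:ℝ) s, b' r (Xi n r ω))
                = ∫ r in Set.Ioc (0:ℝ) s, b' r (Xi n (ct r) ω) := by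
              refine setIntegral_congr_fun measurableSet_Ioc (fun r hr => ?_)
              rw [hcteq r ⟨hr.1.le, hr.2.trans hs.2⟩]
            rw [hI]
          rw [h]
          exact (hu.const_add x).add (hBnm s hs)
      have htend : Filter.Tendsto (fun n => Xi n t) Filter.atTop (nhds (X t)) := by
        rw [tendsto_pi_nhds]
        exact fun ω => hXlim t ht ω
      exact measurable_of_tendsto_metrizable (fun n => hXim n t ⟨ht.1, le_rfl⟩) htend
    · -- a.s. equation
      filter_upwards [hN0ae] with ω hω t ht
      have h1 := hXeqn ω t ht
      have h2 : (∫ s in Set.Ioc (0:ℝ) t, b' s (X s ω)) = ∫ s in Set.Ioc (0:ℝ) t, b s (X s ω) := by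
        refine setIntegral_congr_fun measurableSet_Ioc (fun s hs => ?_)
        simp only [hb'def, if_pos (show s ∈ Set.Ioc (0:ℝ) T from ⟨hs.1, hs.2.trans ht.2⟩)]
      rw [h1, h2, hBnB ω hω t ht]
  · -- pathwise uniqueness
    intro X₁ X₂ h1c h1e h2c h2e
    filter_upwards [h1c, h1e, h2c, h2e] with ω hc1 he1 hc2 he2
    have hIntSol : ∀ (Y : ℝ → Ω → E), ContinuousOn (fun s => Y s ω) (Set.Icc 0 T) →
        ∀ t ∈ Set.Icc (0:ℝ) T, IntegrableOn (fun s => b s (Y s ω)) (Set.Ioc (0:ℝ) t) := by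
      intro Y hYc t ht
      have hYae : AEMeasurable (fun s => Y s ω) (volume.restrict (Set.Ioc (0:ℝ) t)) := by
        have h1 := hYc.aemeasurable (μ := volume) measurableSet_Icc
        exact h1.mono_measure (Measure.restrict_mono
          (Set.Ioc_subset_Icc_self.trans (Set.Icc_subset_Icc_right ht.2)) le_rfl)
      have hbYae : AEStronglyMeasurable (fun s => b s (Y s ω))
          (volume.restrict (Set.Ioc (0:ℝ) t)) :=
        (hbmeas.comp_aemeasurable (aemeasurable_id.prodMk hYae)).aestronglyMeasurable
      refine Integrable.mono' (g := fun _ => Mr) ?_ hbYae ?_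
      · exact integrableOn_const measure_Ioc_lt_top.ne
      · refine (ae_restrict_iff' measurableSet_Ioc).mpr (Filter.Eventually.of_forall
          (fun s hs => hbM s ⟨hs.1.le, hs.2.trans ht.2⟩ _))
    have hgcont : ContinuousOn (fun s => ‖X₁ s ω - X₂ s ω‖) (Set.Icc (0:ℝ) T) :=
      (hc1.sub hc2).norm
    have hdiffeq : ∀ t ∈ Set.Icc (0:ℝ) T, X₁ t ω - X₂ t ω
        = ∫ s in Set.Ioc (0:ℝ) t, (b s (X₁ s ω) - b s (X₂ s ω)) := by
      intro t ht
      rw [he1 t ht, he2 t ht,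
        integral_sub (hIntSol X₁ hc1 t ht) (hIntSol X₂ hc2 t ht)]
      abel
    have hkey := aux_picard_decay (T := T) hKppos
      (show (0:ℝ) ≤ 2*Mr*T by positivity)
      (fun _ s => ‖X₁ s ω - X₂ s ω‖) ?_ ?_ ?_
    · intro t ht
      have hle0 : ‖X₁ t ω - X₂ t ω‖ ≤ 0 := by
        refine ge_of_tendsto' (htendgeo ((2*Mr*T) * Real.exp (2*Kp*T))) (fun n => ?_)
        calc ‖X₁ t ω - X₂ t ω‖ ≤ (2*Mr*T) * (1/2)^n * Real.exp (2*Kp*t) := hkey n t ht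
          _ ≤ (2*Mr*T) * (1/2)^n * Real.exp (2*Kp*T) := by
              apply mul_le_mul_of_nonneg_left
                (Real.exp_le_exp.mpr (by nlinarith [ht.2])) (by positivity)
          _ = (2*Mr*T) * Real.exp (2*Kp*T) * (1/2)^n := by ring
      have := norm_le_zero_iff.mp hle0
      exact sub_eq_zero.mp this
    · -- initial bound
      intro t ht
      show ‖X₁ t ω - X₂ t ω‖ ≤ 2*Mr*T
      rw [hdiffeq t ht]
      have hb2 : ∀ s ∈ Set.Ioc (0:ℝ) t, ‖b s (X₁ s ω) - b s (X₂ s ω)‖ ≤ 2*Mr := by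
        intro s hs
        have hsIcc : s ∈ Set.Icc (0:ℝ) T := ⟨hs.1.le, hs.2.trans ht.2⟩
        calc ‖b s (X₁ s ω) - b s (X₂ s ω)‖ ≤ ‖b s (X₁ s ω)‖ + ‖b s (X₂ s ω)‖ := norm_sub_le _ _
          _ ≤ Mr + Mr := add_le_add (hbM s hsIcc _) (hbM s hsIcc _)
          _ = 2*Mr := by ring
      calc ‖∫ s in Set.Ioc (0:ℝ) t, (b s (X₁ s ω) - b s (X₂ s ω))‖
          ≤ (2*Mr) * (volume (Set.Ioc (0:ℝ) t)).toReal :=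
            norm_setIntegral_le_of_norm_le_const measure_Ioc_lt_top hb2
        _ ≤ 2*Mr*T := by
            have := hvolIoc t ht
            nlinarith [hMrnn]
    · -- integrability
      intro n
      exact (hgcont.integrableOn_Icc).mono_set Set.Ioc_subset_Icc_self
    · -- recursion
      intro n t ht
      show ‖X₁ t ω - X₂ t ω‖ ≤ Kp * ∫ s in Set.Ioc (0:ℝ) t, ‖X₁ s ω - X₂ s ω‖
      rw [hdiffeq t ht]
      calc ‖∫ s in Set.Ioc (0:ℝ) t, (b s (X₁ s ω) - b s (X₂ s ω))‖
          ≤ ∫ s in Set.Ioc (0:ℝ) t, ‖b s (X₁ s ω) - b s (X₂ s ω)‖ :=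
            norm_integral_le_integral_norm _
        _ ≤ ∫ s in Set.Ioc (0:ℝ) t, Kp * ‖X₁ s ω - X₂ s ω‖ := by
            refine setIntegral_mono_on ?_ ?_ measurableSet_Ioc
              (fun s hs => hbK s ⟨hs.1.le, hs.2.trans ht.2⟩ _ _)
            · exact ((hIntSol X₁ hc1 t ht).sub (hIntSol X₂ hc2 t ht)).norm
            · refine (((hgcont.mono (Set.Icc_subset_Icc_right ht.2)).integrableOn_Icc).mono_set
                Set.Ioc_subset_Icc_self).const_mul Kp
        _ = Kp * ∫ s in Set.Ioc (0:ℝ) t, ‖X₁ s ω - X₂ s ω‖ :=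
            MeasureTheory.integral_const_mul Kp _
end

section
/- Let T ≥ 1 be finite and H ∈ (0,1/2). For every γ ∈ (0,H) there exists a constant C > 0 depending only on T such that for all 0 < θ′ < θ < t ≤ T: K_H(t,θ) − K_H(t,θ′) ≤ C · c_H · ( (θ − θ′)/(θ θ′) )^γ · θ^{H − 1/2 − γ} · (t − θ)^{H − 1/2 − γ}. -/
open MeasureTheory intervalIntegral

noncomputable def fbmPhi (a x : ℝ) : ℝ := ∫ v in (1:ℝ)..x, v ^ (a - 1) * (v - 1) ^ a

lemma fbmF_contOn {a : ℝ} : ContinuousOn (fun v : ℝ => v ^ (a - 1) * (v - 1) ^ a) (Set.Ioi 1) := by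
  intro v hv
  have hv1 : (1:ℝ) < v := hv
  have h1 : ContinuousAt (fun v : ℝ => v ^ (a - 1)) v :=
    Real.continuousAt_rpow_const v (a - 1) (Or.inl (by positivity))
  have h2 : ContinuousAt (fun v : ℝ => (v - 1) ^ a) v := by
    have : ContinuousAt (fun y : ℝ => y ^ a) (v - 1) :=
      Real.continuousAt_rpow_const (v - 1) a (Or.inl (by nlinarith))
    exact ContinuousAt.comp (g := fun y : ℝ => y ^ a) this (continuousAt_id.sub continuousAt_const)
  exact (h1.mul h2).continuousWithinAt

lemma fbmF_intInt {a : ℝ} (ha : -1 < a) (ha0 : a < 0) {x : ℝ} (hx : 1 ≤ x) :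
    IntervalIntegrable (fun v : ℝ => v ^ (a - 1) * (v - 1) ^ a) volume 1 x := by
  have hg : IntervalIntegrable (fun v : ℝ => (v - 1) ^ a) volume 1 x := by
    have := (intervalIntegrable_rpow' (a := (0:ℝ)) (b := x - 1) ha).comp_sub_right 1
    simpa using this
  refine hg.mono_fun ?_ ?_
  · have huIoc : Set.uIoc (1:ℝ) x = Set.Ioc 1 x := Set.uIoc_of_le hx
    refine (fbmF_contOn.mono ?_).aestronglyMeasurable measurableSet_uIoc
    rw [huIoc]; exact Set.Ioc_subset_Ioi_self
  · rw [Filter.EventuallyLE, ae_restrict_iff' measurableSet_uIoc]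
    refine Filter.Eventually.of_forall (fun v hv => ?_)
    rw [Set.uIoc_of_le hx] at hv
    have hv1 : (1:ℝ) < v := hv.1
    have h0v : (0:ℝ) < v := by linarith
    have hnn : (0:ℝ) ≤ (v - 1) ^ a := Real.rpow_nonneg (by linarith) a
    have h1 : v ^ (a - 1) ≤ 1 := Real.rpow_le_one_of_one_le_of_nonpos hv1.le (by linarith)
    have h2 : (0:ℝ) ≤ v ^ (a - 1) := Real.rpow_nonneg h0v.le _
    simp only [Real.norm_eq_abs]
    rw [abs_of_nonneg (mul_nonneg h2 hnn), abs_of_nonneg hnn]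
    nlinarith

lemma fbmPhi_nonneg {a x : ℝ} (hx : 1 ≤ x) : 0 ≤ fbmPhi a x := by
  refine intervalIntegral.integral_nonneg hx (fun v hv => ?_)
  have : (0:ℝ) ≤ v := by have := hv.1; linarith
  exact mul_nonneg (Real.rpow_nonneg this _) (Real.rpow_nonneg (by linarith [hv.1]) _)

lemma fbmPhi_hasDerivAt {a : ℝ} (ha : -1 < a) (ha0 : a < 0) {x : ℝ} (hx : 1 < x) :
    HasDerivAt (fbmPhi a) (x ^ (a - 1) * (x - 1) ^ a) x := by
  refine intervalIntegral.integral_hasDerivAt_right (fbmF_intInt ha ha0 hx.le) ?_ ?_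
  · exact (fbmF_contOn.stronglyMeasurableAtFilter isOpen_Ioi) x hx
  · exact fbmF_contOn.continuousAt (Ioi_mem_nhds hx)

/-- The normalizing constant `c_H = √(2H / ((1-2H) B(1-2H, H+1/2)))`, where the Beta function is
expressed via Gamma functions: `B(a,b) = Γ(a)Γ(b)/Γ(a+b)`. -/
noncomputable def cH (H : ℝ) : ℝ :=
  Real.sqrt (2 * H /
    ((1 - 2 * H) * (Real.Gamma (1 - 2 * H) * Real.Gamma (H + 1 / 2) /
      Real.Gamma ((1 - 2 * H) + (H + 1 / 2)))))

/-- The fractional Brownian kernel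
`K_H(t,s) = c_H [ (t/s)^{H-1/2}(t-s)^{H-1/2} + (1/2-H) s^{1/2-H} ∫_s^t u^{H-3/2}(u-s)^{H-1/2} du ]`. -/
noncomputable def KH (H t s : ℝ) : ℝ :=
  cH H * ((t / s) ^ (H - 1 / 2) * (t - s) ^ (H - 1 / 2) +
    (1 / 2 - H) * s ^ (1 / 2 - H) * ∫ u in s..t, u ^ (H - 3 / 2) * (u - s) ^ (H - 1 / 2))


noncomputable def fbmG (a t s : ℝ) : ℝ :=
  t ^ a / s ^ a * (t - s) ^ a - a * s ^ a * fbmPhi a (t / s)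

lemma KH_repr {H t s : ℝ} (hs : 0 < s) (hst : s < t) :
    KH H t s = cH H * fbmG (H - 1/2) t s := by
  set a := H - 1/2 with ha
  have ht : 0 < t := hs.trans hst
  have hts : (1:ℝ) < t / s := (one_lt_div hs).2 hst
  have key : (∫ u in s..t, u ^ (a - 1) * (u - s) ^ a)
      = s * (s ^ (a-1) * s ^ a) * fbmPhi a (t / s) := by
    have h1 := intervalIntegral.smul_integral_comp_mul_left
      (f := fun u : ℝ => u ^ (a - 1) * (u - s) ^ a) (a := (1:ℝ)) (b := t / s) s
    rw [mul_one, mul_div_cancel₀ _ hs.ne'] at h1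
    rw [← h1]
    have h2 : ∀ v ∈ Set.uIcc (1:ℝ) (t/s),
        (s * v) ^ (a - 1) * (s * v - s) ^ a
          = (s ^ (a-1) * s ^ a) * (v ^ (a - 1) * (v - 1) ^ a) := by
      intro v hv
      have hv1 : (1:ℝ) ≤ v := by
        rcases Set.mem_uIcc.1 hv with h | h
        · exact h.1
        · linarith [h.1, hts.le]
      have hv0 : (0:ℝ) ≤ v := by linarith
      have e1 : (s * v) ^ (a - 1) = s ^ (a-1) * v ^ (a-1) := Real.mul_rpow hs.le hv0
      have e2 : (s * v - s) ^ a = s ^ a * (v - 1) ^ a := by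
        rw [show s * v - s = s * (v - 1) by ring, Real.mul_rpow hs.le (by linarith)]
      rw [e1, e2]; ring
    rw [intervalIntegral.integral_congr h2, intervalIntegral.integral_const_mul]
    unfold fbmPhi
    simp only [smul_eq_mul]; ring
  have hexp1 : H - 3/2 = a - 1 := by rw [ha]; ring
  have hexp2 : (1:ℝ)/2 - H = -a := by rw [ha]; ring
  have hpow : s ^ (-a) * (s * (s ^ (a-1) * s ^ a)) = s ^ a := by
    rw [show s * (s ^ (a-1) * s ^ a) = s ^ (1:ℝ) * (s ^ (a-1) * s ^ a) by rw [Real.rpow_one],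
      ← Real.rpow_add hs, ← Real.rpow_add hs, ← Real.rpow_add hs]
    congr 1; ring
  have hdiv : (t / s) ^ a = t ^ a / s ^ a := Real.div_rpow ht.le hs.le a
  unfold KH fbmG
  rw [← ha, hexp1, hexp2, key, hdiv]
  congr 1
  have e : (-a) * s ^ (-a) * (s * (s ^ (a-1) * s ^ a) * fbmPhi a (t/s))
      = (-a) * (s ^ (-a) * (s * (s ^ (a-1) * s ^ a))) * fbmPhi a (t/s) := by ring
  rw [e, hpow]; ring

lemma fbmD_hasDerivAt {a t s : ℝ} (ha : -1 < a) (ha0 : a < 0) (hs : 0 < s) (hst : s < t) :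
    HasDerivAt (fun x => fbmG a t x - (t - x) ^ a)
      (a * (t - s) ^ (a-1) * (1 - t ^ a / s ^ a) - a^2 * s ^ (a-1) * fbmPhi a (t / s)) s := by
  have ht : 0 < t := hs.trans hst
  have hts : (1:ℝ) < t / s := (one_lt_div hs).2 hst
  have hts0 : (0:ℝ) < t - s := by linarith
  have hP : HasDerivAt (fun x : ℝ => x ^ a) (a * s ^ (a-1)) s :=
    Real.hasDerivAt_rpow_const (Or.inl hs.ne')
  have hTS : HasDerivAt (fun x : ℝ => (t - x) ^ a) (a * (t - s) ^ (a-1) * (-1)) s := by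
    have hout : HasDerivAt (fun y : ℝ => y ^ a) (a * (t - s) ^ (a-1)) (t - s) :=
      Real.hasDerivAt_rpow_const (Or.inl hts0.ne')
    have hin : HasDerivAt (fun x : ℝ => t - x) (-1) s := (hasDerivAt_id s).const_sub t
    exact hout.comp s hin
  have hPa0 : s ^ a ≠ 0 := (Real.rpow_pos_of_pos hs a).ne'
  have hdivc : HasDerivAt (fun x : ℝ => t ^ a / x ^ a)
      ((0 * s ^ a - t ^ a * (a * s ^ (a-1))) / (s ^ a) ^ 2) s :=
    (hasDerivAt_const s (t ^ a)).div hP hPa0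
  have hquot : HasDerivAt (fun x : ℝ => t / x) ((0 * s - t * 1) / s ^ 2) s :=
    (hasDerivAt_const s t).div (hasDerivAt_id s) hs.ne'
  have hPhi : HasDerivAt (fun x : ℝ => fbmPhi a (t / x))
      ((t/s) ^ (a-1) * ((t/s) - 1) ^ a * ((0 * s - t * 1) / s ^ 2)) s :=
    (fbmPhi_hasDerivAt ha ha0 hts).comp s hquot
  have hraw := ((hdivc.mul hTS).sub ((hP.const_mul a).mul hPhi)).sub hTS
  convert hraw using 1
  case e'_4 => rfl
  case e'_5 => rfl
  case e'_8 => rfl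
  have e1 : (t/s) ^ (a-1) = t ^ (a-1) / s ^ (a-1) := Real.div_rpow ht.le hs.le _
  have e2 : (t/s) - 1 = (t-s)/s := by field_simp
  have e3 : ((t-s)/s) ^ a = (t-s) ^ a / s ^ a := Real.div_rpow hts0.le hs.le a
  have e4 : t ^ (a-1) = t ^ a / t := Real.rpow_sub_one ht.ne' a
  have e5 : s ^ (a-1) = s ^ a / s := Real.rpow_sub_one hs.ne' a
  rw [e1, e2, e3, e4, e5]
  have hQ0 : t ^ a ≠ 0 := (Real.rpow_pos_of_pos ht a).ne'
  field_simp
  ring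

lemma fbmD_anti {a t θ' θ : ℝ} (ha : -1 < a) (ha0 : a < 0)
    (h0 : 0 < θ') (h1 : θ' < θ) (h2 : θ < t) :
    fbmG a t θ - (t - θ) ^ a ≤ fbmG a t θ' - (t - θ') ^ a := by
  have hmem : ∀ s ∈ Set.Icc θ' θ, 0 < s ∧ s < t := fun s hs =>
    ⟨lt_of_lt_of_le h0 hs.1, lt_of_le_of_lt hs.2 h2⟩
  have hanti : AntitoneOn (fun x => fbmG a t x - (t - x) ^ a) (Set.Icc θ' θ) := by
    refine antitoneOn_of_deriv_nonpos (convex_Icc θ' θ) ?_ ?_ ?_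
    · intro s hs
      obtain ⟨hs0, hst⟩ := hmem s hs
      exact ((fbmD_hasDerivAt ha ha0 hs0 hst).continuousAt).continuousWithinAt
    · rw [interior_Icc]
      intro s hs
      obtain ⟨hs0, hst⟩ := hmem s (Set.Ioo_subset_Icc_self hs)
      exact ((fbmD_hasDerivAt ha ha0 hs0 hst).differentiableAt).differentiableWithinAt
    · rw [interior_Icc]
      intro s hs
      obtain ⟨hs0, hst⟩ := hmem s (Set.Ioo_subset_Icc_self hs)
      rw [(fbmD_hasDerivAt ha ha0 hs0 hst).deriv]
      have hts : (1:ℝ) < t / s := (one_lt_div hs0).2 hst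
      have hQP : t ^ a < s ^ a := Real.rpow_lt_rpow_of_neg hs0 hst ha0
      have hP : (0:ℝ) < s ^ a := Real.rpow_pos_of_pos hs0 a
      have h1' : (0:ℝ) < 1 - t ^ a / s ^ a := by
        rw [sub_pos]; exact (div_lt_one hP).2 hQP
      have hR : (0:ℝ) < (t - s) ^ (a-1) := Real.rpow_pos_of_pos (by linarith) _
      have hphi : 0 ≤ fbmPhi a (t / s) := fbmPhi_nonneg hts.le
      have hs1 : (0:ℝ) ≤ s ^ (a-1) := (Real.rpow_pos_of_pos hs0 _).le
      have t1 : a * (t - s) ^ (a-1) * (1 - t ^ a / s ^ a) ≤ 0 := by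
        have := mul_pos hR h1'
        nlinarith
      have t2 : 0 ≤ a^2 * s ^ (a-1) * fbmPhi a (t / s) := by positivity
      linarith
  exact hanti (Set.mem_Icc.2 ⟨le_refl θ', h1.le⟩) (Set.mem_Icc.2 ⟨h1.le, le_refl θ⟩) h1.le

lemma rpow_diff_le {a γ x y : ℝ} (ha : -1 ≤ a) (ha0 : a < 0) (hγ : 0 < γ) (hγ1 : γ ≤ 1)
    (hx : 0 < x) (hxy : x < y) :
    x ^ a - y ^ a ≤ (y - x) ^ γ * x ^ (a - γ) := by
  have hy : 0 < y := hx.trans hxy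
  have hδ : 0 < y - x := by linarith
  have hxag : x ^ (a - γ) = x ^ a / x ^ γ := by
    rw [Real.rpow_sub hx]
  rcases le_or_gt x (y - x) with hcase | hcase
  · -- x ≤ δ : crude bound
    have h1 : x ^ a - y ^ a ≤ x ^ a := by
      have : 0 ≤ y ^ a := (Real.rpow_pos_of_pos hy a).le
      linarith
    have h2 : x ^ γ ≤ (y - x) ^ γ := Real.rpow_le_rpow hx.le hcase hγ.le
    have h3 : x ^ a = x ^ (a - γ) * x ^ γ := by
      rw [← Real.rpow_add hx]; ring_nf
    have h4 : x ^ (a - γ) * x ^ γ ≤ x ^ (a - γ) * (y - x) ^ γ :=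
      mul_le_mul_of_nonneg_left h2 (Real.rpow_pos_of_pos hx _).le
    calc x ^ a - y ^ a ≤ x ^ a := h1
      _ = x ^ (a - γ) * x ^ γ := h3
      _ ≤ x ^ (a - γ) * (y - x) ^ γ := h4
      _ = (y - x) ^ γ * x ^ (a - γ) := by ring
  · -- δ < x
    have hr0 : 0 < x / y := div_pos hx hy
    have hr1 : x / y ≤ 1 := (div_le_one hy).2 hxy.le
    have hb : y ^ a = x ^ a * (x/y) ^ (-a) := by
      rw [Real.div_rpow hx.le hy.le, Real.rpow_neg hx.le, Real.rpow_neg hy.le]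
      field_simp
    have hrb : x / y ≤ (x/y) ^ (-a) := by
      have := Real.rpow_le_rpow_of_exponent_ge hr0 hr1 (show -a ≤ 1 by linarith)
      rwa [Real.rpow_one] at this
    have hmid : 1 - (x/y) ^ (-a) ≤ (y - x)/x := by
      have h5 : 1 - x/y = (y - x)/y := by field_simp
      have h6 : (y - x)/y ≤ (y - x)/x := div_le_div_of_nonneg_left hδ.le hx hxy.le
      linarith
    have hg : (y - x)/x ≤ ((y - x)/x) ^ γ := by
      have hb0 : 0 < (y - x)/x := div_pos hδ hx
      have hb1 : (y - x)/x ≤ 1 := (div_le_one hx).2 hcase.le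
      have := Real.rpow_le_rpow_of_exponent_ge hb0 hb1 hγ1
      rwa [Real.rpow_one] at this
    have key : x ^ a - y ^ a ≤ x ^ a * ((y - x)/x) ^ γ := by
      have hxa : (0:ℝ) ≤ x ^ a := (Real.rpow_pos_of_pos hx a).le
      have : x ^ a - y ^ a = x ^ a * (1 - (x/y) ^ (-a)) := by rw [hb]; ring
      rw [this]
      exact mul_le_mul_of_nonneg_left (le_trans hmid hg) hxa
    calc x ^ a - y ^ a ≤ x ^ a * ((y - x)/x) ^ γ := key
      _ = (y - x) ^ γ * x ^ (a - γ) := by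
          rw [Real.div_rpow hδ.le hx.le, hxag]; ring

set_option maxHeartbeats 1000000 in
/-- There is a constant `C > 0` depending only on `T` such that for every
`H ∈ (0,1/2)`, every `γ ∈ (0,H)` and all `0 < θ' < θ < t ≤ T`:
`K_H(t,θ) − K_H(t,θ') ≤ C c_H ((θ−θ')/(θθ'))^γ θ^{H−1/2−γ} (t−θ)^{H−1/2−γ}`. -/
theorem KH_increment_bound (T : ℝ) (hT : 1 ≤ T) :
    ∃ C > (0 : ℝ), ∀ H ∈ Set.Ioo (0 : ℝ) (1 / 2), ∀ γ ∈ Set.Ioo (0 : ℝ) H,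
      ∀ θ' θ t : ℝ, 0 < θ' → θ' < θ → θ < t → t ≤ T →
        KH H t θ - KH H t θ' ≤
          C * cH H * ((θ - θ') / (θ * θ')) ^ γ * θ ^ (H - 1 / 2 - γ) *
            (t - θ) ^ (H - 1 / 2 - γ) := by
  have hT0 : (0:ℝ) < T := by linarith
  refine ⟨T^3, by positivity, ?_⟩
  rintro H ⟨hH0, hH2⟩ γ ⟨hγ0, hγH⟩ θ' θ t h0 h1 h2 h3
  set a := H - 1/2 with ha
  have ha1 : -1 < a := by rw [ha]; linarith
  have ha0 : a < 0 := by rw [ha]; linarith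
  have hθ0 : 0 < θ := h0.trans h1
  have ht0 : 0 < t := hθ0.trans h2
  have hγ1 : γ ≤ 1 := by linarith
  have hcH : 0 ≤ cH H := Real.sqrt_nonneg _
  -- step 1+2: kernel increment bounded by increment of (t-s)^a
  have step12 : KH H t θ - KH H t θ' ≤ cH H * ((t - θ) ^ a - (t - θ') ^ a) := by
    rw [KH_repr hθ0 h2, KH_repr h0 (h1.trans h2), ← ha, ← mul_sub]
    have := fbmD_anti ha1 ha0 h0 h1 h2
    have hG : fbmG a t θ - fbmG a t θ' ≤ (t - θ) ^ a - (t - θ') ^ a := by linarith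
    exact mul_le_mul_of_nonneg_left hG hcH
  -- step 3: elementary rpow inequality
  have step3 : (t - θ) ^ a - (t - θ') ^ a ≤ (θ - θ') ^ γ * (t - θ) ^ (a - γ) := by
    have h := rpow_diff_le ha1.le ha0 hγ0 hγ1 (show (0:ℝ) < t - θ by linarith)
      (show t - θ < t - θ' by linarith)
    rwa [show t - θ' - (t - θ) = θ - θ' by ring] at h
  -- step 5: absorb powers of θ, θ' into T^3
  have hδ0 : (0:ℝ) < θ - θ' := by linarith
  have step5 : (θ - θ') ^ γ * (t - θ) ^ (a - γ) ≤
      T^3 * ((θ - θ') / (θ * θ')) ^ γ * θ ^ (a - γ) * (t - θ) ^ (a - γ) := by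
    have htθ : (0:ℝ) ≤ (t - θ) ^ (a - γ) := Real.rpow_nonneg (by linarith) _
    have hkey : (θ - θ') ^ γ ≤ T^3 * ((θ - θ') / (θ * θ')) ^ γ * θ ^ (a - γ) := by
      have hprod0 : (0:ℝ) < θ * θ' := mul_pos hθ0 h0
      have hdr : ((θ - θ') / (θ * θ')) ^ γ = (θ - θ') ^ γ / (θ * θ') ^ γ :=
        Real.div_rpow hδ0.le hprod0.le γ
      have hθT : θ ≤ T := by linarith
      have hθ'T : θ' ≤ T := by linarith
      have hTγ : T ^ γ ≤ T := by
        have := Real.rpow_le_rpow_of_exponent_le hT hγ1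
        rwa [Real.rpow_one] at this
      have hm : (θ * θ') ^ γ ≤ T * T := by
        have h6 : (θ * θ') ^ γ ≤ (T * T) ^ γ :=
          Real.rpow_le_rpow hprod0.le (by nlinarith) hγ0.le
        have h7 : (T * T) ^ γ = T ^ γ * T ^ γ := Real.mul_rpow hT0.le hT0.le
        have h8 : T ^ γ * T ^ γ ≤ T * T := by
          have h9 : (0:ℝ) ≤ T ^ γ := Real.rpow_nonneg hT0.le _
          nlinarith
        linarith
      have hga0 : 0 ≤ γ - a := by linarith
      have hga1 : γ - a ≤ 1 := by rw [ha]; linarith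
      have hθga : θ ^ (γ - a) ≤ T := by
        have h10 : θ ^ (γ - a) ≤ T ^ (γ - a) := Real.rpow_le_rpow hθ0.le hθT hga0
        have h11 : T ^ (γ - a) ≤ T ^ (1:ℝ) := Real.rpow_le_rpow_of_exponent_le hT hga1
        rw [Real.rpow_one] at h11
        exact h10.trans h11
      have hrn : θ ^ (a - γ) = (θ ^ (γ - a))⁻¹ := by
        rw [show a - γ = -(γ - a) by ring, Real.rpow_neg hθ0.le]
      have hA : 0 < (θ - θ') ^ γ := Real.rpow_pos_of_pos hδ0 γ
      have hB : 0 < (θ * θ') ^ γ := Real.rpow_pos_of_pos hprod0 γ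
      have hC : 0 < θ ^ (γ - a) := Real.rpow_pos_of_pos hθ0 _
      rw [hdr, hrn, show T^3 * ((θ - θ') ^ γ / (θ * θ') ^ γ) * (θ ^ (γ - a))⁻¹
        = T^3 * (θ - θ') ^ γ / ((θ * θ') ^ γ * θ ^ (γ - a)) by field_simp,
        le_div_iff₀ (mul_pos hB hC)]
      have hBC : (θ * θ') ^ γ * θ ^ (γ - a) ≤ T ^ 3 := by
        have h12 := mul_le_mul hm hθga hC.le (mul_nonneg hT0.le hT0.le)
        calc (θ * θ') ^ γ * θ ^ (γ - a) ≤ T * T * T := h12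
          _ = T ^ 3 := by ring
      calc (θ - θ') ^ γ * ((θ * θ') ^ γ * θ ^ (γ - a))
          ≤ (θ - θ') ^ γ * T ^ 3 := mul_le_mul_of_nonneg_left hBC hA.le
        _ = T ^ 3 * (θ - θ') ^ γ := by ring
    calc (θ - θ') ^ γ * (t - θ) ^ (a - γ)
        ≤ (T^3 * ((θ - θ') / (θ * θ')) ^ γ * θ ^ (a - γ)) * (t - θ) ^ (a - γ) :=
          mul_le_mul_of_nonneg_right hkey htθ
      _ = T^3 * ((θ - θ') / (θ * θ')) ^ γ * θ ^ (a - γ) * (t - θ) ^ (a - γ) := by ring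
  calc KH H t θ - KH H t θ' ≤ cH H * ((t - θ) ^ a - (t - θ') ^ a) := step12
    _ ≤ cH H * ((θ - θ') ^ γ * (t - θ) ^ (a - γ)) := mul_le_mul_of_nonneg_left step3 hcH
    _ ≤ cH H * (T^3 * ((θ - θ') / (θ * θ')) ^ γ * θ ^ (a - γ) * (t - θ) ^ (a - γ)) :=
          mul_le_mul_of_nonneg_left step5 hcH
    _ = T^3 * cH H * ((θ - θ') / (θ * θ')) ^ γ * θ ^ (a - γ) * (t - θ) ^ (a - γ) := by ring
end

section
/- Let T ≥ 1 be finite and H ∈ (0,1/2). There exists a constant C > 0 depending only on T such that for all 0 < θ < s ≤ T: |K_H(s,θ)| ≤ C · c_H · (s − θ)^{H − 1/2} · θ^{H − 1/2}. -/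
open MeasureTheory intervalIntegral

/-!
Write `r = H - 1/2 ∈ (-1/2, 0)`, so that `K_H(s,θ) = c_H [(s/θ)^r (s-θ)^r + (-r) θ^{-r} I]` with
`I = ∫_θ^s u^{r-1} (u-θ)^r du`. The first term is at most `(s-θ)^r`. For `I`, bound `u^{r-1}` by
`θ^{r-1}` on `[θ, 2θ]` and by `(u-θ)^{r-1}` beyond `2θ`; this gives
`I ≤ θ^{2r} (1/(r+1) + 1/(-2r))`, and the prefactor `-r` absorbs the blow-up of `1/(-2r)` as
`H → 1/2`, so the second term is at most `(3/2) θ^r` uniformly in `H`. Finally each of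
`(s-θ)^r, θ^r` is at least `T^{-1/2}` because `s ≤ T` and `T ≥ 1`, which supplies the missing
factor.
-/

open Set
open scoped Interval

section KernelIntegral

variable {r θ : ℝ}

lemma intervalIntegrable_sub_rpow (hr : -1 < r) (θ a b : ℝ) :
    IntervalIntegrable (fun u => (u - θ) ^ r) volume a b := by
  simpa using (intervalIntegrable_rpow' (a := a - θ) (b := b - θ) hr).comp_sub_right θ

lemma intervalIntegrable_rpow_mul_sub_rpow (p : ℝ) (hθ : 0 < θ) (hr : -1 < r) {b : ℝ}
    (hθb : θ ≤ b) : IntervalIntegrable (fun u => u ^ p * (u - θ) ^ r) volume θ b := by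
  refine (intervalIntegrable_sub_rpow hr θ θ b).continuousOn_mul
    (continuousOn_id.rpow_const fun u hu => ?_)
  rw [uIcc_of_le hθb] at hu
  exact Or.inl (hθ.trans_le hu.1).ne'

lemma integral_self_two_mul_rpow_mul_sub_rpow_le (hθ : 0 < θ) (hr : -1 < r) (hr1 : r ≤ 1) :
    ∫ u in θ..2 * θ, u ^ (r - 1) * (u - θ) ^ r ≤ θ ^ (2 * r) / (r + 1) := by
  have hθ2θ : θ ≤ 2 * θ := by linarith
  have hbound : ∀ u ∈ Icc θ (2 * θ), u ^ (r - 1) * (u - θ) ^ r ≤ θ ^ (r - 1) * (u - θ) ^ r :=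
    fun u hu => mul_le_mul_of_nonneg_right
      (Real.rpow_le_rpow_of_nonpos hθ hu.1 (by linarith)) (Real.rpow_nonneg (by linarith [hu.1]) _)
  calc ∫ u in θ..2 * θ, u ^ (r - 1) * (u - θ) ^ r
      ≤ ∫ u in θ..2 * θ, θ ^ (r - 1) * (u - θ) ^ r :=
        integral_mono_on hθ2θ (intervalIntegrable_rpow_mul_sub_rpow _ hθ hr hθ2θ)
          ((intervalIntegrable_sub_rpow hr θ θ (2 * θ)).const_mul _) hbound
    _ = θ ^ (r - 1) * (θ ^ (r + 1) / (r + 1)) := by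
        rw [intervalIntegral.integral_const_mul, integral_comp_sub_right (· ^ r),
          integral_rpow (Or.inl hr), sub_self, two_mul, add_sub_cancel_right,
          Real.zero_rpow (by linarith), sub_zero]
    _ = θ ^ (2 * r) / (r + 1) := by
        rw [← mul_div_assoc, ← Real.rpow_add hθ]; ring_nf

lemma integral_two_mul_rpow_mul_sub_rpow_le (hθ : 0 < θ) (hr : r < 0) {b : ℝ} (hb : 2 * θ ≤ b) :
    ∫ u in 2 * θ..b, u ^ (r - 1) * (u - θ) ^ r ≤ θ ^ (2 * r) / (-2 * r) := by
  have hpos : ∀ u ∈ [[2 * θ, b]], 0 < u - θ := fun u hu => by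
    rw [uIcc_of_le hb] at hu; linarith [hu.1]
  have hbound : ∀ u ∈ Icc (2 * θ) b, u ^ (r - 1) * (u - θ) ^ r ≤ (u - θ) ^ (2 * r - 1) := by
    intro u hu
    have hu' := hpos u (Icc_subset_uIcc hu)
    calc u ^ (r - 1) * (u - θ) ^ r ≤ (u - θ) ^ (r - 1) * (u - θ) ^ r :=
          mul_le_mul_of_nonneg_right (Real.rpow_le_rpow_of_nonpos hu' (by linarith)
            (by linarith)) (Real.rpow_nonneg hu'.le _)
      _ = (u - θ) ^ (2 * r - 1) := by rw [← Real.rpow_add hu']; ring_nf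
  have hzero : (0 : ℝ) ∉ [[2 * θ - θ, b - θ]] := by
    rw [uIcc_of_le (by linarith)]; exact fun h => by linarith [h.1]
  calc ∫ u in 2 * θ..b, u ^ (r - 1) * (u - θ) ^ r
      ≤ ∫ u in 2 * θ..b, (u - θ) ^ (2 * r - 1) := by
        refine integral_mono_on hb (ContinuousOn.intervalIntegrable ?_)
          (ContinuousOn.intervalIntegrable ?_) hbound
        · refine ContinuousOn.mul (continuousOn_id.rpow_const fun u hu => ?_)
            ((continuousOn_id.sub continuousOn_const).rpow_const fun u hu => ?_)
          · exact Or.inl (by linarith [hpos u hu, hθ] : (0:ℝ) < u).ne'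
          · exact Or.inl (hpos u hu).ne'
        · exact (continuousOn_id.sub continuousOn_const).rpow_const fun u hu =>
            Or.inl (hpos u hu).ne'
    _ = ((b - θ) ^ (2 * r) - θ ^ (2 * r)) / (2 * r) := by
        rw [integral_comp_sub_right (· ^ (2 * r - 1)),
          integral_rpow (Or.inr ⟨by linarith, hzero⟩)]
        ring_nf
    _ = (θ ^ (2 * r) - (b - θ) ^ (2 * r)) / (-2 * r) := by
        rw [neg_mul, div_neg, ← neg_div, neg_sub]
    _ ≤ θ ^ (2 * r) / (-2 * r) :=
        div_le_div_of_nonneg_right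
          (sub_le_self _ (Real.rpow_nonneg (by linarith) _)) (by linarith)

lemma integral_rpow_mul_sub_rpow_le (hθ : 0 < θ) (hr : -1 < r) (hr0 : r < 0) {s : ℝ}
    (hθs : θ ≤ s) :
    ∫ u in θ..s, u ^ (r - 1) * (u - θ) ^ r ≤ θ ^ (2 * r) * (1 / (r + 1) + 1 / (-2 * r)) := by
  set b := max s (2 * θ)
  have hb : 2 * θ ≤ b := le_max_right _ _
  have hint :=
    intervalIntegrable_rpow_mul_sub_rpow (r - 1) hθ hr (hθs.trans (le_max_left s (2 * θ)))
  have hnonneg : 0 ≤ᵐ[volume.restrict (Ioc θ b)] fun u => u ^ (r - 1) * (u - θ) ^ r :=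
    (ae_restrict_mem measurableSet_Ioc).mono fun u hu =>
      mul_nonneg (Real.rpow_nonneg (hθ.trans hu.1).le _) (Real.rpow_nonneg (by linarith [hu.1]) _)
  calc ∫ u in θ..s, u ^ (r - 1) * (u - θ) ^ r
      ≤ ∫ u in θ..b, u ^ (r - 1) * (u - θ) ^ r :=
        integral_mono_interval le_rfl hθs (le_max_left _ _) hnonneg hint
    _ = (∫ u in θ..2 * θ, u ^ (r - 1) * (u - θ) ^ r)
          + ∫ u in 2 * θ..b, u ^ (r - 1) * (u - θ) ^ r :=
        (integral_add_adjacent_intervals (hint.mono_set (uIcc_subset_uIcc_left (by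
          rw [uIcc_of_le (by linarith)]; exact ⟨by linarith, hb⟩)))
          (hint.mono_set (uIcc_subset_uIcc_right (by
          rw [uIcc_of_le (by linarith)]; exact ⟨by linarith, hb⟩)))).symm
    _ ≤ θ ^ (2 * r) / (r + 1) + θ ^ (2 * r) / (-2 * r) :=
        add_le_add (integral_self_two_mul_rpow_mul_sub_rpow_le hθ hr (by linarith))
          (integral_two_mul_rpow_mul_sub_rpow_le hθ hr0 hb)
    _ = θ ^ (2 * r) * (1 / (r + 1) + 1 / (-2 * r)) := by ring

lemma neg_mul_rpow_neg_mul_integral_le (hθ : 0 < θ) (hr : -1 / 2 ≤ r) (hr0 : r < 0) {s : ℝ}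
    (hθs : θ ≤ s) : -r * θ ^ (-r) * ∫ u in θ..s, u ^ (r - 1) * (u - θ) ^ r ≤ 3 / 2 * θ ^ r := by
  have hcoeff : -r / (r + 1) ≤ 1 := (div_le_one (by linarith)).mpr (by linarith)
  calc -r * θ ^ (-r) * ∫ u in θ..s, u ^ (r - 1) * (u - θ) ^ r
      ≤ -r * θ ^ (-r) * (θ ^ (2 * r) * (1 / (r + 1) + 1 / (-2 * r))) :=
        mul_le_mul_of_nonneg_left (integral_rpow_mul_sub_rpow_le hθ (by linarith) hr0 hθs)
          (mul_nonneg (by linarith) (Real.rpow_nonneg hθ.le _))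
    _ = (-r / (r + 1) + 1 / 2) * θ ^ r := by
        have hr1 : r + 1 ≠ 0 := by linarith
        have hr2 : r ≠ 0 := hr0.ne
        rw [← mul_assoc, mul_assoc (-r), ← Real.rpow_add hθ, show -r + 2 * r = r by ring]
        field_simp
        ring
    _ ≤ 3 / 2 * θ ^ r := by
        gcongr
        linarith

end KernelIntegral

lemma one_le_sqrt_mul_rpow {T x r : ℝ} (hT : 1 ≤ T) (hx : 0 < x) (hxT : x ≤ T) (hr : -1 / 2 ≤ r)
    (hr0 : r ≤ 0) : 1 ≤ √T * x ^ r :=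
  calc (1 : ℝ) = T ^ (1 / 2 : ℝ) * T ^ (-(1 / 2) : ℝ) := by
        rw [← Real.rpow_add (by linarith)]; norm_num
    _ ≤ √T * x ^ r := by
        rw [Real.sqrt_eq_rpow]
        gcongr
        exact (Real.rpow_le_rpow_of_exponent_le hT (by linarith)).trans
          (Real.rpow_le_rpow_of_nonpos hx hxT hr0)

lemma cH_nonneg (H : ℝ) : 0 ≤ cH H := Real.sqrt_nonneg _

lemma abs_KH_le {H θ s : ℝ} (hH : H ∈ Ioo (0 : ℝ) (1 / 2)) (hθ : 0 < θ) (hθs : θ < s) :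
    |KH H s θ| ≤ cH H * ((s - θ) ^ (H - 1 / 2) + 3 / 2 * θ ^ (H - 1 / 2)) := by
  obtain ⟨hH0, hH1⟩ := hH
  set r := H - 1 / 2 with hr
  set I := ∫ u in θ..s, u ^ (r - 1) * (u - θ) ^ r
  have hK : KH H s θ = cH H * ((s / θ) ^ r * (s - θ) ^ r + -r * θ ^ (-r) * I) := by
    rw [KH, show H - 3 / 2 = r - 1 by ring, show 1 / 2 - H = -r by ring]
  have hI : 0 ≤ I := integral_nonneg hθs.le fun u hu =>
    mul_nonneg (Real.rpow_nonneg (hθ.trans_le hu.1).le _) (Real.rpow_nonneg (by linarith [hu.1]) _)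
  have hfirst : (s / θ) ^ r * (s - θ) ^ r ≤ (s - θ) ^ r :=
    mul_le_of_le_one_left (Real.rpow_nonneg (by linarith) _)
      (Real.rpow_le_one_of_one_le_of_nonpos ((one_le_div hθ).mpr hθs.le) (by linarith))
  have hfirst_nonneg : 0 ≤ (s / θ) ^ r * (s - θ) ^ r :=
    mul_nonneg (Real.rpow_nonneg (div_pos (hθ.trans hθs) hθ).le _)
      (Real.rpow_nonneg (sub_pos.2 hθs).le _)
  have hsecond_nonneg : 0 ≤ -r * θ ^ (-r) * I :=
    mul_nonneg (mul_nonneg (by linarith) (Real.rpow_nonneg hθ.le _)) hI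
  rw [hK, abs_mul, abs_of_nonneg (cH_nonneg H),
    abs_of_nonneg (add_nonneg hfirst_nonneg hsecond_nonneg)]
  exact mul_le_mul_of_nonneg_left (add_le_add hfirst
    (neg_mul_rpow_neg_mul_integral_le hθ (by linarith) (by linarith) hθs.le)) (cH_nonneg H)

/-- There is a constant `C > 0` depending only on `T` such that for every
`H ∈ (0,1/2)` and all `0 < θ < s ≤ T`: `|K_H(s,θ)| ≤ C c_H (s−θ)^{H−1/2} θ^{H−1/2}`. -/
theorem KH_bound (T : ℝ) (hT : 1 ≤ T) :
    ∃ C > (0 : ℝ), ∀ H ∈ Set.Ioo (0 : ℝ) (1 / 2),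
      ∀ θ s : ℝ, 0 < θ → θ < s → s ≤ T →
        |KH H s θ| ≤ C * cH H * (s - θ) ^ (H - 1 / 2) * θ ^ (H - 1 / 2) := by
  refine ⟨5 / 2 * √T, by positivity, ?_⟩
  rintro H hH θ s hθ hθs hsT
  have hsqrt {x : ℝ} (hx : 0 < x) (hxT : x ≤ T) : 1 ≤ √T * x ^ (H - 1 / 2) :=
    one_le_sqrt_mul_rpow hT hx hxT (by linarith [hH.1]) (by linarith [hH.2])
  calc |KH H s θ| ≤ cH H * ((s - θ) ^ (H - 1 / 2) + 3 / 2 * θ ^ (H - 1 / 2)) :=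
        abs_KH_le hH hθ hθs
    _ ≤ cH H * ((s - θ) ^ (H - 1 / 2) * (√T * θ ^ (H - 1 / 2))
          + 3 / 2 * θ ^ (H - 1 / 2) * (√T * (s - θ) ^ (H - 1 / 2))) :=
        mul_le_mul_of_nonneg_left (add_le_add
          (le_mul_of_one_le_right (Real.rpow_nonneg (by linarith) _) (hsqrt hθ (by linarith)))
          (le_mul_of_one_le_right (by positivity) (hsqrt (by linarith) (by linarith))))
          (cH_nonneg H)
    _ = 5 / 2 * √T * cH H * (s - θ) ^ (H - 1 / 2) * θ ^ (H - 1 / 2) := by ring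
end

section
/- Let d ≥ 1 and let m_1,…,m_d be positive integers with M := Σ_{k=1}^d m_k. Then Π_{k=1}^d (2 m_k)! ≤ (2π)^{d/2} · e^{M/2} · Γ( (5/2) M + 1 ) / sqrt(5 π M). -/
/-!
Since a multinomial coefficient is an integer, `∏ₖ (2 mₖ)! ≤ (2M)! = Γ(2M + 1)`, and `Γ` is
increasing on `[2, ∞)`, so this is at most `Γ(5M/2 + 1)`. It remains to see that the prefactor
`(2π)^{d/2} e^{M/2} / √(5πM)` is at least `1`; this follows from `(2π)^{d/2} ≥ √(2π)` and
`5M/2 < e M ≤ e^M`.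
-/

open Real Finset Nat

theorem Nat.prod_factorial_le_factorial_sum {α : Type*} (s : Finset α) (f : α → ℕ) :
    ∏ i ∈ s, (f i)! ≤ (∑ i ∈ s, f i)! :=
  Nat.le_of_dvd (factorial_pos _) (prod_factorial_dvd_factorial_sum s f)

namespace Real

theorem factorial_le_Gamma_add_one {n : ℕ} {x : ℝ} (hn : 1 ≤ n) (hx : (n : ℝ) ≤ x) :
    (n ! : ℝ) ≤ Gamma (x + 1) := by
  have hn' : (1 : ℝ) ≤ n := by exact_mod_cast hn
  rw [← Gamma_nat_eq_factorial]
  exact Gamma_strictMonoOn_Ici.monotoneOn (Set.mem_Ici.2 (by linarith))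
    (Set.mem_Ici.2 (by linarith)) (by linarith)

theorem sqrt_le_rpow_half {a r : ℝ} (ha : 1 ≤ a) (hr : 1 ≤ r) : √a ≤ a ^ (r / 2) := by
  rw [sqrt_eq_rpow]
  exact rpow_le_rpow_of_exponent_le ha (by linarith)

theorem sqrt_five_pi_mul_le {x : ℝ} (hx : 0 ≤ x) : √(5 * π * x) ≤ √(2 * π) * exp (x / 2) := by
  have hx' : 5 * x ≤ 2 * exp x := by
    nlinarith [exp_one_mul_le_exp (x := x), exp_one_gt_d9]
  rw [exp_half, ← sqrt_mul (by positivity)]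
  apply sqrt_le_sqrt
  nlinarith [pi_pos]

end Real

/-- For positive integers `m_1,…,m_d` with `M = Σ m_k`:
`∏_{k=1}^d (2 m_k)! ≤ (2π)^{d/2} e^{M/2} Γ((5/2) M + 1) / √(5 π M)`. -/
theorem prod_factorial_le_gamma (d : ℕ) (hd : 1 ≤ d) (m : Fin d → ℕ) (hm : ∀ k, 1 ≤ m k) :
    (∏ k, (Nat.factorial (2 * m k) : ℝ)) ≤
      (2 * Real.pi) ^ ((d : ℝ) / 2) * Real.exp ((∑ k, (m k : ℝ)) / 2) *
        (Real.Gamma ((5 / 2) * (∑ k, (m k : ℝ)) + 1) /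
          Real.sqrt (5 * Real.pi * (∑ k, (m k : ℝ)))) := by
  have hM : 1 ≤ ∑ k, m k := (hm ⟨0, hd⟩).trans (single_le_sum (by simp) (mem_univ _))
  set M : ℝ := ∑ k, (m k : ℝ) with hMdef
  have hM' : (1 : ℝ) ≤ M := by rw [hMdef]; exact_mod_cast hM
  have hGamma : (∏ k, ((2 * m k)! : ℝ)) ≤ Gamma (5 / 2 * M + 1) :=
    calc (∏ k, ((2 * m k)! : ℝ)) = ((∏ k, (2 * m k)! : ℕ) : ℝ) := by push_cast; rfl
      _ ≤ ((2 * ∑ k, m k)! : ℝ) := by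
        rw [mul_sum]; exact_mod_cast Nat.prod_factorial_le_factorial_sum _ _
      _ ≤ Gamma (5 / 2 * M + 1) :=
        factorial_le_Gamma_add_one (by omega) (by push_cast; linarith [hMdef])
  have hsqrt : √(5 * π * M) ≤ (2 * π) ^ ((d : ℝ) / 2) * exp (M / 2) :=
    (sqrt_five_pi_mul_le (by linarith)).trans <| by
      gcongr
      exact sqrt_le_rpow_half (by linarith [pi_gt_three]) (by exact_mod_cast hd)
  have hpos : 0 < √(5 * π * M) := sqrt_pos.2 (by positivity)
  calc (∏ k, ((2 * m k)! : ℝ)) ≤ Gamma (5 / 2 * M + 1) := hGamma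
    _ = √(5 * π * M) * (Gamma (5 / 2 * M + 1) / √(5 * π * M)) := by field_simp
    _ ≤ _ := mul_le_mul_of_nonneg_right hsqrt (by positivity)
end
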